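/- Let m̂ ∈ P₂(ℝ^d), R > 0, φ ∈ UC_m̂, κ ∈ (0,1], ε > 0, m ∈ B_R(m̂), and let μ̄ be an Ekeland point for (φ,κ,ε,m). Then φ(μ̄) + (1/(2κ²))W₂²(m,μ̄) ≤ φ_κ(m) + N_κ^ε(R,m), where N_κ^ε(R,m) = εκ√(2φ_κ(m)) + ε·M_κ^ε(R). -/

import Mathlib

open MeasureTheory Set Filter Topology
open scoped ENNReal NNReal InnerProductSpace

noncomputable section

/-- `ℝ^d` with the Euclidean structure. -/
abbrev Ed (d : ℕ) : Type := EuclideanSpace ℝ (Fin d)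

/-- A Borel probability measure with finite second moment. -/
def IsP2Meas {E : Type*} [NormedAddCommGroup E] [MeasurableSpace E] (μ : Measure E) : Prop :=
  IsProbabilityMeasure μ ∧ ∫⁻ x, (‖x‖₊ : ℝ≥0∞) ^ 2 ∂μ < ⊤

/-- The Wasserstein space `P₂(ℝ^d)` of Borel probability measures with finite second moment. -/
def P2 (d : ℕ) : Type := {μ : Measure (Ed d) // IsP2Meas μ}

/-- `ς₂(μ)`, the square root of the second moment of `μ`. -/
def varsigma2 {d : ℕ} (μ : P2 d) : ℝ :=
  Real.sqrt (∫⁻ x, (‖x‖₊ : ℝ≥0∞) ^ 2 ∂μ.1).toReal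

/-- `π` is a plan (coupling) between `μ` and `ν`. -/
def IsCoupling {d : ℕ} (π : Measure (Ed d × Ed d)) (μ ν : P2 d) : Prop :=
  π.map Prod.fst = μ.1 ∧ π.map Prod.snd = ν.1

/-- The quadratic transport cost of a plan. -/
def Wcost {d : ℕ} (π : Measure (Ed d × Ed d)) : ℝ≥0∞ :=
  ∫⁻ p, (‖p.1 - p.2‖₊ : ℝ≥0∞) ^ 2 ∂π

/-- The 2-Wasserstein distance. -/
def W2 {d : ℕ} (μ ν : P2 d) : ℝ :=
  Real.sqrt (⨅ π ∈ {π : Measure (Ed d × Ed d) | IsCoupling π μ ν}, Wcost π).toReal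

/-- `π ∈ Π_o(μ,ν)` : an optimal plan between `μ` and `ν`. -/
def IsOptPlan {d : ℕ} (π : Measure (Ed d × Ed d)) (μ ν : P2 d) : Prop :=
  IsCoupling π μ ν ∧ ∀ π' : Measure (Ed d × Ed d), IsCoupling π' μ ν → Wcost π ≤ Wcost π'

/-- The closed Wasserstein ball `B_R(m̂)`. -/
def ballW {d : ℕ} (mhat : P2 d) (R : ℝ) : Set (P2 d) := {μ | W2 mhat μ ≤ R}

/-- The open Wasserstein ball `O_R(m̂)`. -/
def oballW {d : ℕ} (mhat : P2 d) (R : ℝ) : Set (P2 d) := {μ | W2 mhat μ < R}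

/-- The Dirac measure at the origin as an element of `P₂(ℝ^d)`. -/
def dirac0 (d : ℕ) : P2 d :=
  ⟨Measure.dirac 0, ⟨by infer_instance, by rw [lintegral_dirac]; simp⟩⟩

/-- The class `UC_m̂` : nonnegative, uniformly continuous on every bounded set,
positive-definite at `m̂`. -/
structure UCmem {d : ℕ} (mhat : P2 d) (φ : P2 d → ℝ) : Prop where
  nonneg : ∀ μ : P2 d, 0 ≤ φ μ
  unif_cont : ∀ R > (0 : ℝ), ∀ η > (0 : ℝ), ∃ δ > (0 : ℝ), ∀ μ ν : P2 d,
    W2 mhat μ ≤ R → W2 mhat ν ≤ R → W2 μ ν ≤ δ → |φ μ - φ ν| ≤ η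
  zero_at : φ mhat = 0
  pos_off : ∀ μ : P2 d, μ ≠ mhat → 0 < φ μ

/-- The inf-convolution `φ_κ`. -/
def infConv {d : ℕ} (φ : P2 d → ℝ) (κ : ℝ) (m : P2 d) : ℝ :=
  ⨅ μ : P2 d, (φ μ + 1 / (2 * κ ^ 2) * W2 m μ ^ 2)

/-- `S(R) = sup_{μ ∈ B_R(m̂)} φ(μ)`. -/
def Sfun {d : ℕ} (mhat : P2 d) (φ : P2 d → ℝ) (R : ℝ) : ℝ := sSup (φ '' ballW mhat R)

/-- `I(R) = inf_{μ ∉ O_R(m̂)} φ(μ)`. -/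
def Ifun {d : ℕ} (mhat : P2 d) (φ : P2 d → ℝ) (R : ℝ) : ℝ := sInf (φ '' (oballW mhat R)ᶜ)

/-- `G_R = {μ : φ(μ) ≤ I(R)/2}`. -/
def Gset {d : ℕ} (mhat : P2 d) (φ : P2 d → ℝ) (R : ℝ) : Set (P2 d) :=
  {μ | φ μ ≤ Ifun mhat φ R / 2}

/-- `G_R^κ = {μ : φ_κ(μ) ≤ I(R)/2}`. -/
def GsetK {d : ℕ} (mhat : P2 d) (φ : P2 d → ℝ) (κ R : ℝ) : Set (P2 d) :=
  {μ | infConv φ κ μ ≤ Ifun mhat φ R / 2}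

/-- `𝓡(R) = sup{r ≥ 0 : B_r(m̂) ⊆ G_R}`. -/
def Rfun {d : ℕ} (mhat : P2 d) (φ : P2 d → ℝ) (R : ℝ) : ℝ :=
  sSup {r : ℝ | 0 ≤ r ∧ ballW mhat r ⊆ Gset mhat φ R}

/-- `M_κ^ε(R) = κ√(2S(R)+ε²κ²) − εκ²`. -/
def Mke {d : ℕ} (mhat : P2 d) (φ : P2 d → ℝ) (κ ε R : ℝ) : ℝ :=
  κ * Real.sqrt (2 * Sfun mhat φ R + ε ^ 2 * κ ^ 2) - ε * κ ^ 2

/-- `M^ε(R) = R + √(2S(R)+ε²)`. -/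
def Me {d : ℕ} (mhat : P2 d) (φ : P2 d → ℝ) (ε R : ℝ) : ℝ :=
  R + Real.sqrt (2 * Sfun mhat φ R + ε ^ 2)

/-- `ω_R^ε(δ)`, the modulus of continuity of `φ` on `B_{M^ε(R)}(m̂)`. -/
def omegaR {d : ℕ} (mhat : P2 d) (φ : P2 d → ℝ) (ε R δ : ℝ) : ℝ :=
  sSup {c : ℝ | ∃ ν₁ ν₂ : P2 d, W2 ν₁ ν₂ ≤ δ ∧ W2 mhat ν₁ ≤ Me mhat φ ε R ∧
    W2 mhat ν₂ ≤ Me mhat φ ε R ∧ c = |φ ν₁ - φ ν₂|}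

/-- `K_κ^ε(R) = εκ² + κ√(ε²κ² + 2ω_R^ε(M_κ^ε(R)))`. -/
def Kke {d : ℕ} (mhat : P2 d) (φ : P2 d → ℝ) (κ ε R : ℝ) : ℝ :=
  ε * κ ^ 2 + κ * Real.sqrt (ε ^ 2 * κ ^ 2 + 2 * omegaR mhat φ ε R (Mke mhat φ κ ε R))

/-- `N_κ^ε(R,m) = εκ√(2φ_κ(m)) + ε·M_κ^ε(R)`. -/
def Nke {d : ℕ} (mhat : P2 d) (φ : P2 d → ℝ) (κ ε R : ℝ) (m : P2 d) : ℝ :=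
  ε * κ * Real.sqrt (2 * infConv φ κ m) + ε * Mke mhat φ κ ε R

/-- `μ̄` is an Ekeland point for `(φ,κ,ε,m)`. -/
def EkelandPt {d : ℕ} (φ : P2 d → ℝ) (κ ε : ℝ) (m μb : P2 d) : Prop :=
  (φ μb + 1 / (2 * κ ^ 2) * W2 m μb ^ 2 ≤ φ m - ε * W2 μb m) ∧
  ∀ μ : P2 d, φ μb + 1 / (2 * κ ^ 2) * W2 m μb ^ 2 ≤
    φ μ + 1 / (2 * κ ^ 2) * W2 m μ ^ 2 + ε * W2 μb μ

/-- The proximal subgradient inequality at `m` with target `μ`, slope measure `α`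
and parameter `σ`. -/
def ProxIneq {d : ℕ} (φ : P2 d → ℝ) (ε σ : ℝ) (m : P2 d)
    (α : Measure (Ed d × Ed d)) (μ : P2 d) : Prop :=
  ∀ β : Measure (Ed d × Ed d × Ed d), IsP2Meas β →
    IsCoupling (β.map fun z => (z.1, z.2.1)) m μ →
    β.map (fun z => (z.1, z.2.2)) = α →
    φ m + ∫ z, ⟪z.2.2, z.2.1 - z.1⟫_ℝ ∂β - σ * ∫ z, ‖z.2.1 - z.1‖ ^ 2 ∂β
      - ε * W2 m μ ≤ φ μ

/-- `α ∈ ∂_P^ε φ(m)` : proximal `ε`-subgradient. -/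
def ProxSubgrad {d : ℕ} (φ : P2 d → ℝ) (ε : ℝ) (m : P2 d)
    (α : Measure (Ed d × Ed d)) : Prop :=
  IsP2Meas α ∧ ∃ σ > (0 : ℝ), ∃ r > (0 : ℝ), ∀ μ : P2 d, W2 m μ ≤ r → ProxIneq φ ε σ m α μ

/-- `(φ,ψ)` is a control-Lyapunov pair at `m̂` for the dynamics `f`, with threshold `ε₀`. -/
structure IsCLP {d : ℕ} {U : Type*} (f : Ed d → P2 d → U → Ed d) (mhat : P2 d)
    (φ : P2 d → ℝ) (ψ : P2 d → ℝ → ℝ) (ε₀ : ℝ) : Prop where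
  phi_uc : UCmem mhat φ
  psi_pos : ∀ (m : P2 d) (ε : ℝ), 0 < ε → 0 < ψ m ε
  psi_cont : ∀ (m : P2 d) (ε : ℝ), 0 < ε → ∀ η > (0 : ℝ), ∃ δ > (0 : ℝ),
    ∀ (m' : P2 d) (ε' : ℝ), 0 < ε' → W2 m m' < δ → |ε - ε'| < δ → |ψ m ε - ψ m' ε'| < η
  level_bdd : ∀ c : ℝ, ∃ K : ℝ, ∀ μ : P2 d, φ μ ≤ c → W2 mhat μ ≤ K
  psi_inf_pos : ∀ r R : ℝ, 0 < r → r < R → ∀ ε > (0 : ℝ), ∃ g > (0 : ℝ),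
    ∀ m : P2 d, W2 mhat m ≤ R → ¬ W2 mhat m < r → g ≤ ψ m ε
  psi_mono : ∀ (m : P2 d) (ε ε' : ℝ), 0 < ε → ε ≤ ε' → ψ m ε ≤ ψ m ε'
  eps0_pos : 0 < ε₀
  decrease : ∀ ε : ℝ, 0 < ε → ε < ε₀ → ∀ (m : P2 d) (α : Measure (Ed d × Ed d)),
    ProxSubgrad φ ε m α → ∃ u : U, ∫ z, ⟪z.2, f z.1 m u⟫_ℝ ∂α ≤ -ψ m ε

/-- A partition of `[0,∞)`. -/
def IsPartition (θ : ℕ → ℝ) : Prop :=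
  θ 0 = 0 ∧ StrictMono θ ∧ Tendsto θ atTop atTop

/-- The steps of the partition `θ` lie in `[δ₁, δ₂]` (i.e. `θ ∈ Θ(δ₁,δ₂)`). -/
def StepIn (θ : ℕ → ℝ) (δ₁ δ₂ : ℝ) : Prop :=
  ∀ i : ℕ, δ₁ ≤ θ (i + 1) - θ i ∧ θ (i + 1) - θ i ≤ δ₂

/-- `W₂`-continuity of a measure-valued curve on `[a,b]`. -/
def W2ContinuousOn {d : ℕ} (m : ℝ → P2 d) (a b : ℝ) : Prop :=
  ∀ t ∈ Icc a b, ∀ η > (0 : ℝ), ∃ δ > (0 : ℝ), ∀ s ∈ Icc a b, |s - t| < δ →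
    W2 (m s) (m t) < η

/-- `m` is a `W₂`-continuous distributional solution of the non-local continuity equation
`∂_t m_t + div(f(x,m_t,u) m_t) = 0` on `[a,b]` with constant control `u`. -/
def SolvesCE {d : ℕ} {U : Type*} (f : Ed d → P2 d → U → Ed d) (u : U)
    (m : ℝ → P2 d) (a b : ℝ) : Prop :=
  W2ContinuousOn m a b ∧
  ∀ χ : Ed d × ℝ → ℝ, ContDiff ℝ (⊤ : ℕ∞) χ → HasCompactSupport χ →
    tsupport χ ⊆ univ ×ˢ Ioo a b →
    ∫ t in a..b, ∫ x, (deriv (fun s : ℝ => χ (x, s)) t +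
      fderiv ℝ (fun y : Ed d => χ (y, t)) x (f x (m t) u)) ∂(m t).1 = 0

/-- A `θ`-trajectory of the controlled continuity equation under the feedback `k`,
starting from `m_*`. -/
def IsTraj {d : ℕ} {U : Type*} (f : Ed d → P2 d → U → Ed d) (k : P2 d → U)
    (θ : ℕ → ℝ) (mstar : P2 d) (m : ℝ → P2 d) : Prop :=
  m 0 = mstar ∧ ∀ i : ℕ, SolvesCE f (k (m (θ i))) m (θ i) (θ (i + 1))

/-- The extremal-shift value `∫ ((x−y)/κ²)·f(x,m,u) dπ(x,y)`. -/
def shiftVal {d : ℕ} {U : Type*} (f : Ed d → P2 d → U → Ed d) (κ : ℝ)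
    (π : Measure (Ed d × Ed d)) (m : P2 d) (u : U) : ℝ :=
  ∫ p, ⟪(κ ^ 2)⁻¹ • (p.1 - p.2), f p.1 m u⟫_ℝ ∂π

/-- `k` is an extremal-shift feedback associated with the plan selection `πsel`. -/
def IsExtremalShift {d : ℕ} {U : Type*} (f : Ed d → P2 d → U → Ed d) (κ : ℝ)
    (πsel : P2 d → Measure (Ed d × Ed d)) (k : P2 d → U) : Prop :=
  ∀ (m : P2 d) (u : U), shiftVal f κ (πsel m) m (k m) ≤ shiftVal f κ (πsel m) m u

/-- `C₂(R)` (computed with time-step bound `δ` and `s = ς₂(m̂)`). -/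
def C2const (C₁ δ s R : ℝ) : ℝ :=
  C₁ * Real.exp (C₁ * δ) * (1 + 2 * (C₁ * δ + s + R) * Real.exp (2 * C₁ * δ))

/-- `C₃(R)` (computed with time-step bound `δ` and `s = ς₂(m̂)`). -/
def C3const (C₀ C₁ δ s R : ℝ) : ℝ :=
  C₀ * (C₁ * Real.exp (C₁ * δ) * (1 + 2 * (C₁ * δ + s + R) * Real.exp (2 * C₁ * δ))
    + C2const C₁ δ s R)

/-- A feedback `k` is s-stabilizing at `m̂`. -/
def SStabilizing {d : ℕ} {U : Type*} (f : Ed d → P2 d → U → Ed d) (mhat : P2 d)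
    (k : P2 d → U) : Prop :=
  ∃ M : ℝ → ℝ, (∀ R > (0 : ℝ), 0 < M R) ∧
    Tendsto M (nhdsWithin 0 (Ioi 0)) (nhds 0) ∧
    ∀ r R : ℝ, 0 < r → r < R → ∃ δ > (0 : ℝ), ∃ T > (0 : ℝ),
      ∀ δhat : ℝ, 0 < δhat → δhat < δ →
      ∀ θ : ℕ → ℝ, IsPartition θ → StepIn θ δhat δ →
      ∀ mstar : P2 d, W2 mhat mstar ≤ R →
      ∀ m : ℝ → P2 d, IsTraj f k θ mstar m →
        (∀ t : ℝ, T ≤ t → W2 mhat (m t) ≤ r) ∧ (∀ t : ℝ, 0 ≤ t → W2 mhat (m t) ≤ M R)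

/-!
For every `μ`, condition (ii) and the triangle inequality give
`φ(μ̄) + W₂²(m,μ̄)/2κ² ≤ φ(μ) + W₂²(m,μ)/2κ² + ε (W₂(m,μ̄) + W₂(m,μ))`.
Condition (i) with `φ(m) ≤ S(R)` bounds `W₂(m,μ̄)` by the positive root `M_κ^ε(R)` of
`w²/2κ² + εw = S(R)`, and an `η`-minimiser `μ` of the inf-convolution has
`W₂(m,μ) ≤ κ√(2(φ_κ(m) + η))`; let `η → 0`.
-/

section Gluing
open ProbabilityTheory

variable {X Y Z : Type*} [MeasurableSpace X] [MeasurableSpace Y] [MeasurableSpace Z]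
  [StandardBorelSpace Z] [Nonempty Z]

theorem exists_gluing (π₁ : Measure (X × Y)) (π₂ : Measure (Y × Z)) [IsFiniteMeasure π₁]
    [IsFiniteMeasure π₂] (h : π₁.snd = π₂.fst) :
    ∃ β : Measure ((X × Y) × Z), β.map Prod.fst = π₁ ∧ β.map (fun p => (p.1.2, p.2)) = π₂ := by
  refine ⟨π₁ ⊗ₘ Kernel.prodMkLeft X π₂.condKernel, Measure.fst_compProd _ _, ?_⟩
  ext s hs
  rw [Measure.map_apply (by fun_prop) hs, Measure.compProd_apply (hs.preimage (by fun_prop))]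
  change ∫⁻ a, π₂.condKernel a.2 (Prod.mk a.2 ⁻¹' s) ∂π₁ = _
  rw [← lintegral_map (Kernel.measurable_kernel_prodMk_left hs) measurable_snd, ← Measure.snd, h,
    ← Measure.compProd_apply hs, Measure.disintegrate]

end Gluing

section Wasserstein

variable {d : ℕ}

instance (μ : P2 d) : IsProbabilityMeasure μ.1 := μ.2.1

instance : Nonempty (P2 d) := ⟨dirac0 d⟩

lemma isP2Meas_iff {E : Type*} [NormedAddCommGroup E] [MeasurableSpace E] {μ : Measure E} :
    IsP2Meas μ ↔ IsProbabilityMeasure μ ∧ eLpNorm id 2 μ < ⊤ := by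
  rw [IsP2Meas, eLpNorm_lt_top_iff_lintegral_rpow_enorm_lt_top two_ne_zero ENNReal.ofNat_ne_top]
  simp [enorm_eq_nnnorm]

lemma eLpNorm_id_lt_top (μ : P2 d) : eLpNorm id 2 μ.1 < ⊤ := (isP2Meas_iff.1 μ.2).2

def costNorm (π : Measure (Ed d × Ed d)) : ℝ≥0∞ := eLpNorm (fun p => p.1 - p.2) 2 π

lemma Wcost_eq_costNorm_sq (π : Measure (Ed d × Ed d)) : Wcost π = costNorm π ^ 2 := by
  have h := eLpNorm_nnreal_pow_eq_lintegral (f := fun p : Ed d × Ed d => p.1 - p.2) (μ := π)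
    (p := 2) two_ne_zero
  simp only [NNReal.coe_ofNat, ENNReal.coe_ofNat, ENNReal.rpow_ofNat] at h
  rw [costNorm, h, Wcost]
  simp [enorm_eq_nnnorm]

lemma eLpNorm_snd_sub_fst (π : Measure (Ed d × Ed d)) :
    eLpNorm (fun p => p.2 - p.1) 2 π = costNorm π := by
  simpa [Pi.neg_def, costNorm] using eLpNorm_neg (fun p : Ed d × Ed d => p.1 - p.2) 2 π

lemma costNorm_map {α : Type*} [MeasurableSpace α] (β : Measure α) {g : α → Ed d × Ed d}
    (hg : Measurable g) : costNorm (β.map g) = eLpNorm (fun q => (g q).1 - (g q).2) 2 β :=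
  eLpNorm_map_measure (by fun_prop) hg.aemeasurable

lemma isCoupling_map_iff {α : Type*} [MeasurableSpace α] (β : Measure α) {f g : α → Ed d}
    (hf : Measurable f) (hg : Measurable g) {μ ν : P2 d} :
    IsCoupling (β.map fun q => (f q, g q)) μ ν ↔ β.map f = μ.1 ∧ β.map g = ν.1 := by
  rw [IsCoupling, Measure.map_map measurable_fst (hf.prodMk hg),
    Measure.map_map measurable_snd (hf.prodMk hg)]
  rfl

namespace IsCoupling

variable {π : Measure (Ed d × Ed d)} {μ ν : P2 d}

lemma isProbabilityMeasure (h : IsCoupling π μ ν) : IsProbabilityMeasure π := by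
  have : IsProbabilityMeasure (π.map Prod.fst) := h.1 ▸ μ.2.1
  exact Measure.isProbabilityMeasure_of_map Prod.fst

lemma eLpNorm_fst (h : IsCoupling π μ ν) : eLpNorm Prod.fst 2 π = eLpNorm id 2 μ.1 := by
  rw [← h.1, eLpNorm_map_measure (by fun_prop) (by fun_prop)]; rfl

lemma eLpNorm_snd (h : IsCoupling π μ ν) : eLpNorm Prod.snd 2 π = eLpNorm id 2 ν.1 := by
  rw [← h.2, eLpNorm_map_measure (by fun_prop) (by fun_prop)]; rfl

lemma costNorm_lt_top (h : IsCoupling π μ ν) : costNorm π < ⊤ :=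
  calc costNorm π ≤ eLpNorm Prod.fst 2 π + eLpNorm Prod.snd 2 π :=
        eLpNorm_sub_le (by fun_prop) (by fun_prop) one_le_two
    _ < ⊤ := by
        rw [h.eLpNorm_fst, h.eLpNorm_snd]
        exact ENNReal.add_lt_top.2 ⟨eLpNorm_id_lt_top μ, eLpNorm_id_lt_top ν⟩

lemma W2_le (h : IsCoupling π μ ν) : W2 μ ν ≤ (costNorm π).toReal := by
  have hcost : Wcost π ≠ ⊤ := by
    rw [Wcost_eq_costNorm_sq]; exact ENNReal.pow_ne_top h.costNorm_lt_top.ne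
  calc W2 μ ν ≤ Real.sqrt (Wcost π).toReal :=
        Real.sqrt_le_sqrt (ENNReal.toReal_mono hcost (iInf₂_le π h))
    _ = (costNorm π).toReal := by
        rw [Wcost_eq_costNorm_sq, ENNReal.toReal_pow, Real.sqrt_sq ENNReal.toReal_nonneg]

end IsCoupling

lemma isCoupling_prod (μ ν : P2 d) : IsCoupling (μ.1.prod ν.1) μ ν := by
  constructor <;> simp

lemma W2_nonneg (μ ν : P2 d) : 0 ≤ W2 μ ν := Real.sqrt_nonneg _

lemma exists_isCoupling_costNorm_lt {μ ν : P2 d} {r : ℝ} (hr : W2 μ ν < r) :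
    ∃ π, IsCoupling π μ ν ∧ (costNorm π).toReal < r := by
  set I := ⨅ π ∈ {π : Measure (Ed d × Ed d) | IsCoupling π μ ν}, Wcost π
  have hI : I ≠ ⊤ := by
    refine ne_top_of_le_ne_top ?_ (iInf₂_le (μ.1.prod ν.1) (isCoupling_prod μ ν))
    rw [Wcost_eq_costNorm_sq]
    exact ENNReal.pow_ne_top (isCoupling_prod μ ν).costNorm_lt_top.ne
  have hr0 : 0 < r := (W2_nonneg μ ν).trans_lt hr
  have hIr : I < ENNReal.ofReal (r ^ 2) := by
    rw [ENNReal.lt_ofReal_iff_toReal_lt hI, ← Real.sq_sqrt ENNReal.toReal_nonneg]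
    exact pow_lt_pow_left₀ hr (W2_nonneg μ ν) two_ne_zero
  obtain ⟨π, hπ, hlt⟩ : ∃ π, IsCoupling π μ ν ∧ Wcost π < ENNReal.ofReal (r ^ 2) := by
    simpa [I, iInf_lt_iff] using hIr
  refine ⟨π, hπ, ?_⟩
  rw [Wcost_eq_costNorm_sq, ENNReal.ofReal_pow hr0.le] at hlt
  rw [← ENNReal.toReal_ofReal hr0.le]
  exact ENNReal.toReal_strict_mono ENNReal.ofReal_ne_top
    ((ENNReal.pow_lt_pow_left_iff two_ne_zero).1 hlt)

lemma W2_comm (μ ν : P2 d) : W2 μ ν = W2 ν μ := by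
  suffices key : ∀ μ ν : P2 d, W2 μ ν ≤ W2 ν μ from le_antisymm (key μ ν) (key ν μ)
  intro μ ν
  refine le_of_forall_pos_lt_add fun δ hδ => ?_
  obtain ⟨π, hπ, hlt⟩ := exists_isCoupling_costNorm_lt (lt_add_of_pos_right (W2 ν μ) hδ)
  have hswap : IsCoupling (π.map Prod.swap) μ ν :=
    ⟨Measure.fst_map_swap.trans hπ.2, Measure.snd_map_swap.trans hπ.1⟩
  calc W2 μ ν ≤ (costNorm (π.map Prod.swap)).toReal := hswap.W2_le
    _ = (costNorm π).toReal := by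
        rw [costNorm_map π measurable_swap, ← eLpNorm_snd_sub_fst]
        rfl
    _ < W2 ν μ + δ := hlt

lemma W2_triangle (μ ν ρ : P2 d) : W2 μ ρ ≤ W2 μ ν + W2 ν ρ := by
  refine le_of_forall_pos_lt_add fun δ hδ => ?_
  obtain ⟨π₁, h₁, hlt₁⟩ :=
    exists_isCoupling_costNorm_lt (lt_add_of_pos_right (W2 μ ν) (half_pos hδ))
  obtain ⟨π₂, h₂, hlt₂⟩ :=
    exists_isCoupling_costNorm_lt (lt_add_of_pos_right (W2 ν ρ) (half_pos hδ))
  have := h₁.isProbabilityMeasure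
  have := h₂.isProbabilityMeasure
  obtain ⟨β, hβ₁, hβ₂⟩ := exists_gluing π₁ π₂ (h₁.2.trans h₂.1.symm)
  have h₃ : IsCoupling (β.map fun q => (q.1.1, q.2)) μ ρ := by
    refine (isCoupling_map_iff β (by fun_prop) (by fun_prop)).2 ⟨?_, ?_⟩
    · rw [← h₁.1, ← hβ₁, Measure.map_map measurable_fst measurable_fst]; rfl
    · rw [← h₂.2, ← hβ₂, Measure.map_map measurable_snd (by fun_prop)]; rfl
  have hcost : costNorm (β.map fun q => (q.1.1, q.2)) ≤ costNorm π₁ + costNorm π₂ := by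
    rw [costNorm_map β (by fun_prop), ← hβ₁, ← hβ₂, costNorm_map β measurable_fst,
      costNorm_map β (by fun_prop)]
    calc eLpNorm (fun q : (Ed d × Ed d) × Ed d => q.1.1 - q.2) 2 β
        = eLpNorm ((fun q : (Ed d × Ed d) × Ed d => q.1.1 - q.1.2) + fun q => q.1.2 - q.2) 2 β := by
          congr 1; ext q : 1; simp
      _ ≤ _ := eLpNorm_add_le (by fun_prop) (by fun_prop) one_le_two
  calc W2 μ ρ ≤ (costNorm (β.map fun q => (q.1.1, q.2))).toReal := h₃.W2_le
    _ ≤ (costNorm π₁).toReal + (costNorm π₂).toReal := by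
        rw [← ENNReal.toReal_add h₁.costNorm_lt_top.ne h₂.costNorm_lt_top.ne]
        exact ENNReal.toReal_mono
          (ENNReal.add_ne_top.2 ⟨h₁.costNorm_lt_top.ne, h₂.costNorm_lt_top.ne⟩) hcost
    _ < W2 μ ν + W2 ν ρ + δ := by linarith

def lerp (t : ℝ) (p : Ed d × Ed d) : Ed d := p.1 + t • (p.2 - p.1)

@[fun_prop]
lemma measurable_lerp (t : ℝ) : Measurable (lerp (d := d) t) := by
  unfold lerp; fun_prop

lemma lerp_sub_lerp (s t : ℝ) (p : Ed d × Ed d) :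
    lerp s p - lerp t p = (s - t) • (p.2 - p.1) := by
  simp only [lerp, sub_smul]; abel

namespace IsCoupling

variable {π : Measure (Ed d × Ed d)} {μ ν : P2 d}

lemma isP2Meas_map_lerp (h : IsCoupling π μ ν) (t : ℝ) : IsP2Meas (π.map (lerp t)) := by
  have := h.isProbabilityMeasure
  refine isP2Meas_iff.2 ⟨Measure.isProbabilityMeasure_map (by fun_prop), ?_⟩
  rw [eLpNorm_map_measure (by fun_prop) (by fun_prop)]
  calc eLpNorm (id ∘ lerp t) 2 π
      = eLpNorm (Prod.fst + t • fun p : Ed d × Ed d => p.2 - p.1) 2 π := by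
        congr 1
    _ ≤ eLpNorm Prod.fst 2 π + ‖t‖ₑ * costNorm π := by
        refine (eLpNorm_add_le (by fun_prop) (by fun_prop) one_le_two).trans ?_
        rw [eLpNorm_const_smul, eLpNorm_snd_sub_fst]
    _ < ⊤ := by
        rw [h.eLpNorm_fst]
        exact ENNReal.add_lt_top.2
          ⟨eLpNorm_id_lt_top μ, ENNReal.mul_lt_top enorm_lt_top h.costNorm_lt_top⟩

def interpolant (h : IsCoupling π μ ν) (t : ℝ) : P2 d := ⟨π.map (lerp t), h.isP2Meas_map_lerp t⟩

lemma interpolant_zero (h : IsCoupling π μ ν) : h.interpolant 0 = μ := by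
  refine Subtype.ext (Eq.trans ?_ h.1)
  change π.map (lerp 0) = _
  congr 1
  ext p : 1
  simp [lerp]

lemma interpolant_one (h : IsCoupling π μ ν) : h.interpolant 1 = ν := by
  refine Subtype.ext (Eq.trans ?_ h.2)
  change π.map (lerp 1) = _
  congr 1
  ext p : 1
  simp [lerp]

lemma W2_interpolant_le (h : IsCoupling π μ ν) (s t : ℝ) :
    W2 (h.interpolant s) (h.interpolant t) ≤ |s - t| * (costNorm π).toReal := by
  have hst : IsCoupling (π.map fun p => (lerp s p, lerp t p)) (h.interpolant s)
      (h.interpolant t) :=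
    (isCoupling_map_iff π (by fun_prop) (by fun_prop)).2 ⟨rfl, rfl⟩
  refine hst.W2_le.trans_eq ?_
  rw [costNorm_map π (by fun_prop)]
  simp only [lerp_sub_lerp]
  rw [show (fun p : Ed d × Ed d => (s - t) • (p.2 - p.1)) = (s - t) • fun p => p.2 - p.1
      from rfl, eLpNorm_const_smul, eLpNorm_snd_sub_fst, ENNReal.toReal_mul, toReal_enorm,
    Real.norm_eq_abs]

end IsCoupling

/-- Walk from `m̂` to `μ` along a displacement interpolation, in steps shorter than the modulus
of uniform continuity of `φ` on `B_{|R|+1}(m̂)` at level `1`. -/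
lemma bddAbove_image_ballW {mhat : P2 d} {φ : P2 d → ℝ} (hφ : UCmem mhat φ) (R : ℝ) :
    BddAbove (φ '' ballW mhat R) := by
  set R' := |R| + 1
  obtain ⟨δ, hδ, huc⟩ := hφ.unif_cont R' (by positivity) 1 one_pos
  set n := ⌈R' / δ⌉₊
  have hn : (0 : ℝ) < n := Nat.cast_pos.2 (Nat.ceil_pos.2 (by positivity))
  have hRn : R' / n ≤ δ := by
    rw [div_le_iff₀ hn, mul_comm, ← div_le_iff₀ hδ]
    exact Nat.le_ceil _
  refine ⟨n, ?_⟩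
  rintro _ ⟨μ, hμ, rfl⟩
  obtain ⟨π, hπ, hlt⟩ :=
    exists_isCoupling_costNorm_lt (hμ.trans_lt ((le_abs_self R).trans_lt (lt_add_one _)))
  set c := (costNorm π).toReal
  set γ : ℕ → P2 d := fun i => hπ.interpolant (i / n)
  have hball : ∀ i ≤ n, W2 mhat (γ i) ≤ R' := fun i hi =>
    calc W2 mhat (γ i) = W2 (hπ.interpolant 0) (γ i) := by rw [hπ.interpolant_zero]
      _ ≤ |0 - (i : ℝ) / n| * c := hπ.W2_interpolant_le _ _
      _ ≤ 1 * R' := by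
          gcongr
          rw [zero_sub, abs_neg, abs_div, Nat.abs_cast, Nat.abs_cast]
          exact div_le_one_of_le₀ (Nat.cast_le.2 hi) hn.le
      _ = R' := one_mul R'
  have hstep : ∀ i, W2 (γ (i + 1)) (γ i) ≤ δ := fun i =>
    calc W2 (γ (i + 1)) (γ i) ≤ |((i + 1 : ℕ) : ℝ) / n - i / n| * c := hπ.W2_interpolant_le _ _
      _ = c / n := by
          rw [← sub_div, Nat.cast_succ, add_sub_cancel_left, abs_div, abs_one,
            Nat.abs_cast, one_div_mul_eq_div]
      _ ≤ R' / n := by gcongr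
      _ ≤ δ := hRn
  have hchain : ∀ i ≤ n, φ (γ i) ≤ i := by
    intro i
    induction i with
    | zero => intro _; simp [γ, hπ.interpolant_zero, hφ.zero_at]
    | succ i ih =>
      intro hi
      have hφi := huc _ _ (hball (i + 1) hi) (hball i (by omega)) (hstep i)
      push_cast
      linarith [(abs_le.1 hφi).2, ih (by omega)]
  simpa [γ, hn.ne', hπ.interpolant_one] using hchain n le_rfl

end Wasserstein

lemma le_root_of_sq_div_add_mul_le {κ ε S w : ℝ} (hκ : 0 < κ)
    (h : 1 / (2 * κ ^ 2) * w ^ 2 + ε * w ≤ S) :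
    w ≤ κ * Real.sqrt (2 * S + ε ^ 2 * κ ^ 2) - ε * κ ^ 2 := by
  have hsq : (w + ε * κ ^ 2) ^ 2 ≤ κ ^ 2 * (2 * S + ε ^ 2 * κ ^ 2) := by
    have h' : w ^ 2 + 2 * κ ^ 2 * (ε * w) ≤ 2 * κ ^ 2 * S := by
      have := mul_le_mul_of_nonneg_left h (by positivity : (0 : ℝ) ≤ 2 * κ ^ 2)
      rwa [mul_add, ← mul_assoc, mul_one_div_cancel (by positivity), one_mul] at this
    nlinarith
  have := Real.abs_le_sqrt hsq
  rw [Real.sqrt_mul (by positivity), Real.sqrt_sq hκ.le] at this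
  linarith [le_abs_self (w + ε * κ ^ 2)]

lemma EkelandPt.W2_le {d : ℕ} {φ : P2 d → ℝ} {κ ε S : ℝ} {m μb : P2 d}
    (hek : EkelandPt φ κ ε m μb) (hφ : 0 ≤ φ μb) (hκ : 0 < κ) (hS : φ m ≤ S) :
    W2 m μb ≤ κ * Real.sqrt (2 * S + ε ^ 2 * κ ^ 2) - ε * κ ^ 2 := by
  have h := hek.1
  rw [W2_comm μb m] at h
  exact le_root_of_sq_div_add_mul_le hκ (by linarith)

theorem statement5_general {d : ℕ} (mhat : P2 d) (R : ℝ)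
    (φ : P2 d → ℝ) (hφ : UCmem mhat φ) (κ ε : ℝ) (hκ : κ ∈ Ioc (0 : ℝ) 1) (hε : 0 < ε)
    (m : P2 d) (hm : W2 mhat m ≤ R) (μb : P2 d) (hek : EkelandPt φ κ ε m μb) :
    φ μb + 1 / (2 * κ ^ 2) * W2 m μb ^ 2 ≤ infConv φ κ m + Nke mhat φ κ ε R m := by
  set I := infConv φ κ m
  set M := Mke mhat φ κ ε R
  have hw : W2 m μb ≤ M :=
    hek.W2_le (hφ.nonneg μb) hκ.1 (le_csSup (bddAbove_image_ballW hφ R) ⟨m, hm, rfl⟩)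
  have hbound : ∀ η > 0, φ μb + 1 / (2 * κ ^ 2) * W2 m μb ^ 2 ≤
      I + η + ε * (M + κ * Real.sqrt (2 * (I + η))) := by
    intro η hη
    obtain ⟨μ, hμ⟩ := exists_lt_of_ciInf_lt (lt_add_of_pos_right I hη)
    have hv : W2 m μ ≤ κ * Real.sqrt (2 * (I + η)) := by
      simpa using le_root_of_sq_div_add_mul_le (ε := 0) (S := I + η) hκ.1
        (by linarith [hφ.nonneg μ])
    calc φ μb + 1 / (2 * κ ^ 2) * W2 m μb ^ 2
        ≤ φ μ + 1 / (2 * κ ^ 2) * W2 m μ ^ 2 + ε * W2 μb μ := hek.2 μ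
      _ ≤ I + η + ε * (W2 m μb + W2 m μ) := by
          gcongr
          exact (W2_triangle μb m μ).trans_eq (by rw [W2_comm μb m])
      _ ≤ I + η + ε * (M + κ * Real.sqrt (2 * (I + η))) := by gcongr
  have hlim : Tendsto (fun η => I + η + ε * (M + κ * Real.sqrt (2 * (I + η)))) (𝓝[>] 0)
      (𝓝 (I + Nke mhat φ κ ε R m)) := by
    have hcont : Continuous fun η => I + η + ε * (M + κ * Real.sqrt (2 * (I + η))) := by
      fun_prop
    convert (hcont.tendsto 0).mono_left nhdsWithin_le_nhds using 2
    simp only [Nke, add_zero, I, M]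
    ring
  exact ge_of_tendsto hlim (eventually_nhdsWithin_of_forall hbound)

/-- near-minimality of Ekeland points for the inf-convolution. -/
theorem statement5 {d : ℕ} (mhat : P2 d) (R : ℝ) (hR : 0 < R)
    (φ : P2 d → ℝ) (hφ : UCmem mhat φ) (κ ε : ℝ) (hκ : κ ∈ Ioc (0 : ℝ) 1) (hε : 0 < ε)
    (m : P2 d) (hm : W2 mhat m ≤ R) (μb : P2 d) (hek : EkelandPt φ κ ε m μb) :
    φ μb + 1 / (2 * κ ^ 2) * W2 m μb ^ 2 ≤ infConv φ κ m + Nke mhat φ κ ε R m :=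
  statement5_general mhat R φ hφ κ ε hκ hε m hm μb hek
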